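/- Under Assumptions: (i) ‖∇_θ f_i(x,θ)‖ ≤ L_θ, (ii) ‖∇_θ f_i(x,θ₁) − ∇_θ f_i(x,θ₂)‖ ≤ L_θθ‖θ₁−θ₂‖, (iii) ‖∇_θ f_i(x₁,θ) − ∇_θ f_i(x₂,θ)‖ ≤ L_θx‖x₁−x₂‖. Let δ₁, δ₂ be maximizers of the cross-entropy loss over the adversarial budget at θ₁, θ₂ respectively. Then ‖∇_θ L(x+δ₁,θ₁) − ∇_θ L(x+δ₂,θ₂)‖ ≤ L_θθ‖θ₁−θ₂‖ + L_θx‖δ₁−δ₂‖ + 4L_θ. -/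

import Mathlib

open scoped BigOperators

/-!
Only two facts about the softmax weights `h` matter: they are nonnegative and sum to one, as do
the label weights `y`. A convex combination of vectors of norm at most `Lθ` has norm at most `Lθ`,
which bounds each of the two softmax terms by `Lθ`; the two label terms, having the same weights,
combine into a convex combination of differences `Df i x₁ θ₁ - Df i x₂ θ₂`, each controlled by the
two Lipschitz assumptions through the intermediate point `(x₁, θ₂)`.
-/

section ConvexCombination

variable {ι E : Type*} [Fintype ι] [NormedAddCommGroup E] [NormedSpace ℝ E]

theorem norm_sum_smul_le_of_convex_weights {w : ι → ℝ} {v : ι → E} {C : ℝ}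
    (hw₀ : ∀ i, 0 ≤ w i) (hw₁ : ∑ i, w i = 1) (hv : ∀ i, ‖v i‖ ≤ C) :
    ‖∑ i, w i • v i‖ ≤ C := by
  simpa using (convex_closedBall (0 : E) C).sum_mem (fun i _ => hw₀ i) hw₁
    (fun i _ => mem_closedBall_zero_iff.mpr (hv i))

theorem norm_sum_smul_sub_sum_smul_le_of_convex_weights {w : ι → ℝ} {u v : ι → E} {C : ℝ}
    (hw₀ : ∀ i, 0 ≤ w i) (hw₁ : ∑ i, w i = 1) (huv : ∀ i, ‖u i - v i‖ ≤ C) :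
    ‖(∑ i, w i • u i) - ∑ i, w i • v i‖ ≤ C := by
  rw [← Finset.sum_sub_distrib]
  simp_rw [← smul_sub]
  exact norm_sum_smul_le_of_convex_weights hw₀ hw₁ huv

end ConvexCombination

theorem Real.sum_exp_div_sum_exp {ι : Type*} [Fintype ι] [Nonempty ι] (g : ι → ℝ) :
    ∑ i, Real.exp (g i) / ∑ j, Real.exp (g j) = 1 := by
  rw [← Finset.sum_div, div_self]
  exact (Finset.sum_pos (fun j _ => Real.exp_pos (g j)) Finset.univ_nonempty).ne'

theorem norm_sub_sub_sub_le {E : Type*} [SeminormedAddCommGroup E] (a b c d : E) :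
    ‖(a - b) - (c - d)‖ ≤ ‖a‖ + ‖c‖ + ‖b - d‖ := by
  calc ‖(a - b) - (c - d)‖ = ‖(a - c) - (b - d)‖ := by congr 1; abel
    _ ≤ ‖a - c‖ + ‖b - d‖ := norm_sub_le _ _
    _ ≤ ‖a‖ + ‖c‖ + ‖b - d‖ := by gcongr; exact norm_sub_le _ _

theorem adversarial_loss_grad_smoothness_general
    {Θ X E : Type*} [NormedAddCommGroup Θ] [NormedAddCommGroup X]
    [NormedAddCommGroup E] [NormedSpace ℝ E]
    {K : ℕ} (f : Fin K → X → Θ → ℝ) (Df : Fin K → X → Θ → E)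
    (y : Fin K → ℝ) (Lθ Lθθ Lθx : ℝ)
    (hy_nonneg : ∀ i, 0 ≤ y i) (hy_sum : ∑ i, y i = 1)
    (hDf_bound : ∀ i x θ, ‖Df i x θ‖ ≤ Lθ)
    (hDf_lip_θ : ∀ i x (θ₁ θ₂ : Θ), ‖Df i x θ₁ - Df i x θ₂‖ ≤ Lθθ * ‖θ₁ - θ₂‖)
    (hDf_lip_x : ∀ i (x₁ x₂ : X) θ, ‖Df i x₁ θ - Df i x₂ θ‖ ≤ Lθx * ‖x₁ - x₂‖)
    (h : Fin K → X → Θ → ℝ)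
    (hh : ∀ i x θ, h i x θ = Real.exp (f i x θ) / ∑ j, Real.exp (f j x θ))
    (gradL : X → Θ → E)
    (hgradL : ∀ x θ, gradL x θ =
      (∑ j, h j x θ • Df j x θ) - ∑ i, y i • Df i x θ)
    (x : X) (θ₁ θ₂ : Θ) (δ₁ δ₂ : X) :
    ‖gradL (x + δ₁) θ₁ - gradL (x + δ₂) θ₂‖ ≤
      Lθθ * ‖θ₁ - θ₂‖ + Lθx * ‖δ₁ - δ₂‖ + 4 * Lθ := by
  have : Nonempty (Fin K) := by
    by_contra hempty
    simp [not_nonempty_iff.mp hempty] at hy_sum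
  have hLθ : 0 ≤ Lθ := (norm_nonneg _).trans (hDf_bound (Classical.arbitrary _) x θ₁)
  have hsoftmax : ∀ x θ, ‖∑ j, h j x θ • Df j x θ‖ ≤ Lθ := fun x θ =>
    norm_sum_smul_le_of_convex_weights (fun j => by rw [hh]; positivity)
      (by simp only [hh]; exact Real.sum_exp_div_sum_exp _) (fun j => hDf_bound j x θ)
  have hDf_lip : ∀ i, ‖Df i (x + δ₁) θ₁ - Df i (x + δ₂) θ₂‖ ≤
      Lθθ * ‖θ₁ - θ₂‖ + Lθx * ‖δ₁ - δ₂‖ := fun i =>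
    calc ‖Df i (x + δ₁) θ₁ - Df i (x + δ₂) θ₂‖
        ≤ ‖Df i (x + δ₁) θ₁ - Df i (x + δ₁) θ₂‖ + ‖Df i (x + δ₁) θ₂ - Df i (x + δ₂) θ₂‖ :=
          norm_sub_le_norm_sub_add_norm_sub _ _ _
      _ ≤ Lθθ * ‖θ₁ - θ₂‖ + Lθx * ‖δ₁ - δ₂‖ := by
          gcongr
          · exact hDf_lip_θ i _ θ₁ θ₂
          · simpa using hDf_lip_x i (x + δ₁) (x + δ₂) θ₂
  have hlabels := norm_sum_smul_sub_sum_smul_le_of_convex_weights hy_nonneg hy_sum hDf_lip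
  rw [hgradL, hgradL]
  refine (norm_sub_sub_sub_le _ _ _ _).trans ?_
  linarith [hsoftmax (x + δ₁) θ₁, hsoftmax (x + δ₂) θ₂]

/-- Theorem 2 (Lipschitz smoothness of the adversarial loss): the gradient of the
cross-entropy loss evaluated at the respective maximizers satisfies the stated bound. -/
theorem adversarial_loss_grad_smoothness
    {Θ X E : Type*} [NormedAddCommGroup Θ] [NormedAddCommGroup X]
    [NormedAddCommGroup E] [NormedSpace ℝ E]
    {K : ℕ} (f : Fin K → X → Θ → ℝ) (Df : Fin K → X → Θ → E)
    (y : Fin K → ℝ) (Lθ Lθθ Lθx : ℝ)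
    (hy_nonneg : ∀ i, 0 ≤ y i) (hy_sum : ∑ i, y i = 1)
    (hDf_bound : ∀ i x θ, ‖Df i x θ‖ ≤ Lθ)
    (hDf_lip_θ : ∀ i x (θ₁ θ₂ : Θ), ‖Df i x θ₁ - Df i x θ₂‖ ≤ Lθθ * ‖θ₁ - θ₂‖)
    (hDf_lip_x : ∀ i (x₁ x₂ : X) θ, ‖Df i x₁ θ - Df i x₂ θ‖ ≤ Lθx * ‖x₁ - x₂‖)
    (h : Fin K → X → Θ → ℝ)
    (hh : ∀ i x θ, h i x θ = Real.exp (f i x θ) / ∑ j, Real.exp (f j x θ))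
    (L : X → Θ → ℝ)
    (hL : ∀ x θ, L x θ =
      -∑ i, y i * Real.log (Real.exp (f i x θ) / ∑ j, Real.exp (f j x θ)))
    (gradL : X → Θ → E)
    (hgradL : ∀ x θ, gradL x θ =
      (∑ j, h j x θ • Df j x θ) - ∑ i, y i • Df i x θ)
    (S : Set X) (x : X) (θ₁ θ₂ : Θ) (δ₁ δ₂ : X)
    (hδ₁S : δ₁ ∈ S) (hδ₂S : δ₂ ∈ S)
    (hmax₁ : ∀ δ ∈ S, L (x + δ) θ₁ ≤ L (x + δ₁) θ₁)
    (hmax₂ : ∀ δ ∈ S, L (x + δ) θ₂ ≤ L (x + δ₂) θ₂) :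
    ‖gradL (x + δ₁) θ₁ - gradL (x + δ₂) θ₂‖ ≤
      Lθθ * ‖θ₁ - θ₂‖ + Lθx * ‖δ₁ - δ₂‖ + 4 * Lθ :=
  adversarial_loss_grad_smoothness_general f Df y Lθ Lθθ Lθx hy_nonneg hy_sum hDf_bound hDf_lip_θ
    hDf_lip_x h hh gradL hgradL x θ₁ θ₂ δ₁ δ₂
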